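/- arXiv:2602.23830 — 5 statements merged into one kernel-verified Lean document; each statement's English description precedes it below -/
import Mathlib

section
/- Suppose x* is a local minimizer of (MPVC) at which the Guignard constraint qualification holds, i.e. T(M, x*)⁻ = L(x*)⁻, where M is the feasible set and L(x*) is the linearized cone at x*. Then there exist multipliers y* ∈ ℝᵐ and η_H, η_G ∈ ℝˡ such that −∇f(x*) − Σ_{j=1}^m y*_j ∇g_j(x*) − Σ_{i=1}^l (η_H)_i ∇H_i(x*) − Σ_{i=1}^l (η_G)_i ∇G_i(x*) ∈ T(C, x*)⁻, where (η_H)_i = 0 for i ∈ I₊(x*), (η_H)_i ≤ 0 for i ∈ I₀₀(x*) ∪ I₀₊(x*), (η_H)_i is unrestricted for i ∈ I₀₋(x*), (η_G)_i = 0 for i ∈ I₀(x*) ∪ I₊₊(x*), and (η_G)_i ≤ 0 for i ∈ I₊₀(x*). -/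
/-!
Local minimality of `f` at `x*` over `M`, and that of the active constraint functions `H i`
(`H i x* = 0`) and `G i` (`H i x* > 0`, `G i x* = 0`), which are nonnegative on `M` near `x*`,
makes their gradients nonnegative on `T(M, x*)`, hence, by the Guignard condition, on `L(x*)`.
For `H i` and `G i` this forces the inequalities defining `L(x*)` to be equalities, so
`L(x*) = -L(x*)` and `∇f(x*)` lies in `L(x*)⁻`. Farkas' lemma (finitely generated cones are
closed, by the conic Carathéodory theorem) then writes `∇f(x*)` as a combination of the
constraint gradients with the required signs: the stationarity vector is `0`, which lies in
every polar cone.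
-/

noncomputable section

open Filter Topology

/-- The (Bouligand) tangent cone of `S` at `x`: directions `d` for which there are
sequences `xs k ∈ S`, `xs k → x`, and `lam k ≥ 0` with `lam k • (xs k - x) → d`. -/
def tcone {V : Type*} [NormedAddCommGroup V] [NormedSpace ℝ V] (S : Set V) (x : V) :
    Set V :=
  {d | ∃ (xs : ℕ → V) (lam : ℕ → ℝ), (∀ k, xs k ∈ S) ∧ (∀ k, 0 ≤ lam k) ∧
    Tendsto xs atTop (𝓝 x) ∧ Tendsto (fun k => lam k • (xs k - x)) atTop (𝓝 d)}

/-- The polar cone `K⁻ = {d | ⟨d, v⟩ ≤ 0 for all v ∈ K}`. -/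
def polarCone {V : Type*} [NormedAddCommGroup V] [InnerProductSpace ℝ V] (K : Set V) :
    Set V :=
  {d | ∀ v ∈ K, inner ℝ d v ≤ (0 : ℝ)}

open scoped InnerProductSpace NNReal

section Caratheodory

variable {𝕜 W ι : Type*} [Field 𝕜] [LinearOrder 𝕜] [IsStrictOrderedRing 𝕜]
  [AddCommGroup W] [Module 𝕜 W] [Fintype ι]

lemma exists_nonneg_sub_smul_eq_zero {μ c : ι → 𝕜} (hμ : 0 ≤ μ) (hc : ∃ i, 0 < c i) :
    ∃ i₀, 0 < c i₀ ∧ 0 ≤ μ - (μ i₀ / c i₀) • c ∧ (μ - (μ i₀ / c i₀) • c) i₀ = 0 := by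
  classical
  obtain ⟨i₀, hi₀, hmin⟩ := Finset.exists_min_image {i | 0 < c i} (fun i => μ i / c i)
    (by simpa [Finset.Nonempty] using hc)
  have hci₀ : 0 < c i₀ := by simpa using hi₀
  refine ⟨i₀, hci₀, fun i => ?_, by simp [div_mul_cancel₀ _ hci₀.ne']⟩
  have ht : 0 ≤ μ i₀ / c i₀ := div_nonneg (hμ i₀) hci₀.le
  simp only [Pi.zero_apply, Pi.sub_apply, Pi.smul_apply, smul_eq_mul, sub_nonneg]
  rcases lt_or_ge 0 (c i) with hci | hci
  · exact (le_div_iff₀ hci).mp (hmin i (by simpa using hci))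
  · exact (mul_nonpos_of_nonneg_of_nonpos ht hci).trans (hμ i)

lemma exists_nonneg_combination_support_ssubset {v : ι → W} {μ : ι → 𝕜} (hμ : 0 ≤ μ)
    (hdep : ¬LinearIndepOn 𝕜 v (Function.support μ)) :
    ∃ μ' : ι → 𝕜, 0 ≤ μ' ∧ Function.support μ' ⊂ Function.support μ ∧
      ∑ i, μ' i • v i = ∑ i, μ i • v i := by
  classical
  obtain ⟨c, hcv, hcμ, hc⟩ : ∃ c : ι → 𝕜, ∑ i, c i • v i = 0 ∧ (∀ i, μ i = 0 → c i = 0) ∧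
      ∃ i, 0 < c i := by
    rw [show Function.support μ = ↑(Finset.univ.filter (μ · ≠ 0)) by ext; simp,
      not_linearIndepOn_finset_iff] at hdep
    obtain ⟨f, hf, i, hi, hfi⟩ := hdep
    set c : ι → 𝕜 := fun i => if μ i ≠ 0 then f i else 0
    have hcv : ∑ i, c i • v i = 0 := by
      simpa only [c, Finset.sum_filter, ite_smul, zero_smul] using hf
    have hcμ : ∀ i, μ i = 0 → c i = 0 := fun i hi => by simp [c, hi]
    have hci : c i ≠ 0 := by simpa [c, (Finset.mem_filter.mp hi).2] using hfi
    rcases hci.lt_or_gt with hneg | hpos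
    · exact ⟨-c, by simp [neg_smul, hcv], fun j hj => by simp [hcμ j hj], i, by simpa⟩
    · exact ⟨c, hcv, hcμ, i, hpos⟩
  obtain ⟨i₀, hci₀, hnonneg, hzero⟩ := exists_nonneg_sub_smul_eq_zero hμ hc
  have hsub : Function.support (μ - (μ i₀ / c i₀) • c) ⊆ Function.support μ :=
    Function.support_subset_iff'.mpr fun i hi => by
      simp [Function.notMem_support.mp hi, hcμ i (Function.notMem_support.mp hi)]
  refine ⟨_, hnonneg, (Set.ssubset_iff_of_subset hsub).mpr ⟨i₀, ?_, by simpa using hzero⟩, ?_⟩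
  · exact fun h => hci₀.ne' (hcμ i₀ h)
  · simp [sub_smul, Finset.sum_sub_distrib, mul_smul, ← Finset.smul_sum, hcv]

lemma exists_nonneg_combination_linearIndepOn (v : ι → W) {μ : ι → 𝕜} (hμ : 0 ≤ μ) :
    ∃ μ' : ι → 𝕜, 0 ≤ μ' ∧ LinearIndepOn 𝕜 v (Function.support μ') ∧
      ∑ i, μ' i • v i = ∑ i, μ i • v i := by
  induction hn : (Function.support μ).ncard using Nat.strong_induction_on generalizing μ with
  | _ n ih =>
    by_cases hind : LinearIndepOn 𝕜 v (Function.support μ)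
    · exact ⟨μ, hμ, hind, rfl⟩
    obtain ⟨μ', hμ', hss, hsum⟩ := exists_nonneg_combination_support_ssubset hμ hind
    obtain ⟨μ'', hμ'', hind'', hsum''⟩ :=
      ih _ (hn ▸ Set.ncard_lt_ncard hss (Set.toFinite _)) hμ' rfl
    exact ⟨μ'', hμ'', hind'', hsum''.trans hsum⟩

end Caratheodory

lemma PointedCone.mem_hull_range_iff {W ι : Type*} [AddCommGroup W] [Module ℝ W] [Fintype ι]
    {v : ι → W} {x : W} :
    x ∈ PointedCone.hull ℝ (Set.range v) ↔ ∃ μ : ι → ℝ, 0 ≤ μ ∧ ∑ i, μ i • v i = x := by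
  rw [Submodule.mem_span_range_iff_exists_fun]
  constructor
  · rintro ⟨c, rfl⟩
    exact ⟨fun i => c i, fun i => (c i).2, rfl⟩
  · rintro ⟨μ, hμ, rfl⟩
    exact ⟨fun i => ⟨μ i, hμ i⟩, rfl⟩

section Farkas

variable {V ι : Type*} [Fintype ι]

lemma PointedCone.isClosed_hull_range [NormedAddCommGroup V] [NormedSpace ℝ V]
    [FiniteDimensional ℝ V] (v : ι → V) :
    IsClosed (PointedCone.hull ℝ (Set.range v) : Set V) := by
  classical
  have hunion : (PointedCone.hull ℝ (Set.range v) : Set V) =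
      ⋃ (s : Set ι) (_ : LinearIndepOn ℝ v s),
        Fintype.linearCombination ℝ (fun i : s => v i) '' {c | 0 ≤ c} := by
    ext x
    simp only [SetLike.mem_coe, Set.mem_iUnion, Set.mem_image, Fintype.linearCombination_apply]
    constructor
    · intro hx
      obtain ⟨μ, hμ, rfl⟩ := PointedCone.mem_hull_range_iff.mp hx
      obtain ⟨μ', hμ', hind, hsum⟩ := exists_nonneg_combination_linearIndepOn v hμ
      refine ⟨_, hind, fun i => μ' i, fun i => hμ' i, ?_⟩
      rw [← hsum]
      exact (Finset.sum_congr_set _ _ _ (fun _ _ => rfl)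
        (fun i hi => by rw [Function.notMem_support.mp hi, zero_smul])).symm
    · rintro ⟨s, -, c, hc, rfl⟩
      exact Submodule.sum_mem _ fun i _ =>
        PointedCone.smul_mem _ (hc i) (PointedCone.subset_hull ⟨i, rfl⟩)
  rw [hunion]
  refine isClosed_iUnion_of_finite fun s => isClosed_iUnion_of_finite fun hs => ?_
  have hemb := LinearMap.isClosedEmbedding_of_injective
    (LinearMap.ker_eq_bot.mpr hs.fintypeLinearCombination_injective)
  exact hemb.isClosedMap _ (isClosed_le continuous_const continuous_id)

variable [NormedAddCommGroup V] [InnerProductSpace ℝ V] [FiniteDimensional ℝ V]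

lemma PointedCone.mem_hull_range_of_forall_inner_nonneg (v : ι → V) {w : V}
    (h : ∀ d, (∀ i, 0 ≤ ⟪v i, d⟫_ℝ) → 0 ≤ ⟪w, d⟫_ℝ) :
    w ∈ PointedCone.hull ℝ (Set.range v) := by
  have := FiniteDimensional.complete ℝ V
  by_contra hw
  obtain ⟨y, hy, hwy⟩ := ProperCone.hyperplane_separation'
    (⟨PointedCone.hull ℝ (Set.range v), isClosed_hull_range v⟩ : ProperCone ℝ V) hw
  exact hwy.not_ge (h y fun i => hy _ (PointedCone.subset_hull ⟨i, rfl⟩))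

lemma exists_eq_sum_smul_of_mem_polarCone {E I : ι → Prop} (hEI : ∀ i, E i → ¬I i)
    (v : ι → V) {w : V}
    (hw : w ∈ polarCone {d | (∀ i, E i → ⟪v i, d⟫_ℝ = 0) ∧ (∀ i, I i → ⟪v i, d⟫_ℝ ≤ 0)}) :
    ∃ c : ι → ℝ, (∀ i, ¬E i → ¬I i → c i = 0) ∧ (∀ i, I i → 0 ≤ c i) ∧
      w = ∑ i, c i • v i := by
  classical
  let u : ι ⊕ ι ⊕ ι → V := Sum.elim (fun i => if E i then v i else 0)
    (Sum.elim (fun i => if E i then -v i else 0) (fun i => if I i then v i else 0))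
  obtain ⟨μ, hμ, hμw⟩ := PointedCone.mem_hull_range_iff.mp
    (PointedCone.mem_hull_range_of_forall_inner_nonneg u fun d hd => by
      simpa [inner_neg_right] using hw (-d) ⟨fun i hi => le_antisymm
        (by simpa [u, hi, inner_neg_right] using hd (.inl i))
        (by simpa [u, hi, inner_neg_right] using hd (.inr (.inl i))),
        fun i hi => by simpa [u, hi, inner_neg_right] using hd (.inr (.inr i))⟩)
  refine ⟨fun i => (if E i then μ (.inl i) - μ (.inr (.inl i)) else 0) +
      (if I i then μ (.inr (.inr i)) else 0), fun i hE hI => by simp [hE, hI],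
    fun i hI => by simpa [hI, (hEI i).mt (not_not.mpr hI)] using hμ (.inr (.inr i)), ?_⟩
  rw [← hμw]
  simp only [Fintype.sum_sum_type, ← Finset.sum_add_distrib]
  refine Finset.sum_congr rfl fun i _ => ?_
  by_cases hE : E i <;> by_cases hI : I i <;> simp [u, hE, hI, add_smul, sub_smul] <;> abel

end Farkas

lemma tcone_subset_posTangentConeAt {V : Type*} [NormedAddCommGroup V] [NormedSpace ℝ V]
    (S : Set V) (x : V) : tcone S x ⊆ posTangentConeAt S x := by
  rintro d ⟨xs, lam, hmem, hlam, hxs, hd⟩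
  exact mem_tangentConeAt_of_seq atTop (fun k => (⟨lam k, hlam k⟩ : ℝ≥0)) (fun k => xs k - x)
    (by simpa using hxs.sub_const x) (.of_forall fun k => by simpa using hmem k) hd

section FirstOrder

variable {V : Type*} [NormedAddCommGroup V] [InnerProductSpace ℝ V]

lemma IsLocalMinOn.inner_gradient_nonneg_of_mem_tcone [CompleteSpace V] {φ : V → ℝ} {S : Set V}
    {x d : V} (h : IsLocalMinOn φ S x) (hφ : DifferentiableAt ℝ φ x) (hd : d ∈ tcone S x) :
    0 ≤ ⟪gradient φ x, d⟫_ℝ := by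
  rw [gradient, InnerProductSpace.toDual_symm_apply]
  exact h.hasFDerivWithinAt_nonneg hφ.hasFDerivAt.hasFDerivWithinAt
    (tcone_subset_posTangentConeAt S x hd)

lemma inner_nonneg_of_polarCone_eq {K L : Set V} (hKL : polarCone K = polarCone L) {w : V}
    (hw : ∀ d ∈ K, 0 ≤ ⟪w, d⟫_ℝ) : ∀ d ∈ L, 0 ≤ ⟪w, d⟫_ℝ := by
  have hwL : -w ∈ polarCone L := hKL ▸ fun d hd => by simpa [inner_neg_left] using hw d hd
  exact fun d hd => by simpa [inner_neg_left] using hwL d hd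

end FirstOrder

lemma isLocalMinOn_of_mul_nonneg {X : Type*} [TopologicalSpace X] {S : Set X} {φ ψ : X → ℝ}
    {a : X} (hS : ∀ x ∈ S, 0 ≤ φ x * ψ x) (hψ : ContinuousAt ψ a) (hψa : 0 < ψ a)
    (hφa : φ a = 0) : IsLocalMinOn φ S a := by
  filter_upwards [nhdsWithin_le_nhds (hψ.eventually (eventually_gt_nhds hψa)),
    self_mem_nhdsWithin] with x hψx hx
  exact hφa ▸ nonneg_of_mul_nonneg_left (hS x hx) hψx

section MPVC

variable {V : Type*} [NormedAddCommGroup V] [InnerProductSpace ℝ V] [CompleteSpace V] {m l : ℕ}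
  {g : V → EuclideanSpace ℝ (Fin m)} {G H : Fin l → V → ℝ} {x : V}

variable (g G H x) in
def mpvcLinearizedCone : Set V :=
  {d | (∀ j, ⟪gradient (fun z => g z j) x, d⟫_ℝ = 0) ∧
    (∀ i, H i x = 0 → G i x < 0 → ⟪gradient (H i) x, d⟫_ℝ = 0) ∧
    (∀ i, H i x = 0 → 0 ≤ G i x → ⟪gradient (H i) x, d⟫_ℝ ≤ 0) ∧
    (∀ i, 0 < H i x → G i x = 0 → ⟪gradient (G i) x, d⟫_ℝ ≤ 0)}

lemma neg_mem_mpvcLinearizedCone {d : V}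
    (hH : ∀ i, H i x = 0 → 0 ≤ ⟪gradient (H i) x, d⟫_ℝ)
    (hG : ∀ i, 0 < H i x → G i x = 0 → 0 ≤ ⟪gradient (G i) x, d⟫_ℝ)
    (hd : d ∈ mpvcLinearizedCone g G H x) : -d ∈ mpvcLinearizedCone g G H x := by
  obtain ⟨hg, hH₀, hH₁, hG₁⟩ := hd
  refine ⟨fun j => ?_, fun i h₁ h₂ => ?_, fun i h₁ _ => ?_, fun i h₁ h₂ => ?_⟩ <;>
    simp only [inner_neg_right, neg_eq_zero, neg_nonpos]
  exacts [hg j, hH₀ i h₁ h₂, hH i h₁, hG i h₁ h₂]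

lemma exists_eq_sum_of_mem_polarCone_mpvcLinearizedCone [FiniteDimensional ℝ V] {w : V}
    (hw : w ∈ polarCone (mpvcLinearizedCone g G H x)) :
    ∃ (y : Fin m → ℝ) (ηH ηG : Fin l → ℝ),
      (∀ i, 0 < H i x → ηH i = 0) ∧
      (∀ i, H i x = 0 → 0 ≤ G i x → 0 ≤ ηH i) ∧
      (∀ i, H i x = 0 → ηG i = 0) ∧
      (∀ i, 0 < H i x → 0 < G i x → ηG i = 0) ∧
      (∀ i, 0 < H i x → G i x = 0 → 0 ≤ ηG i) ∧
      w = ∑ j, y j • gradient (fun z => g z j) x + ∑ i, ηH i • gradient (H i) x +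
        ∑ i, ηG i • gradient (G i) x := by
  obtain ⟨c, hc_zero, hc_nonneg, hc_sum⟩ := exists_eq_sum_smul_of_mem_polarCone
    (E := Sum.elim (fun _ => True) (Sum.elim (fun i => H i x = 0 ∧ G i x < 0) fun _ => False))
    (I := Sum.elim (fun _ => False)
      (Sum.elim (fun i => H i x = 0 ∧ 0 ≤ G i x) fun i => 0 < H i x ∧ G i x = 0))
    (by rintro (j | i | i) <;> simp +contextual)
    (Sum.elim (fun j => gradient (fun z => g z j) x)
      (Sum.elim (fun i => gradient (H i) x) fun i => gradient (G i) x))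
    (fun d hd => hw d (by
      simp only [Set.mem_ofPred_eq, Sum.forall, Sum.elim_inl, Sum.elim_inr, true_implies,
        false_implies, implies_true, and_true, true_and, and_imp] at hd
      exact ⟨hd.1.1, hd.1.2, hd.2.1, hd.2.2⟩))
  refine ⟨fun j => c (.inl j), fun i => c (.inr (.inl i)), fun i => c (.inr (.inr i)),
    fun i hi => ?_, fun i hi hi' => ?_, fun i hi => ?_, fun i hi hi' => ?_, fun i hi hi' => ?_, ?_⟩
  · exact hc_zero (.inr (.inl i)) (by simp [hi.ne']) (by simp [hi.ne'])
  · exact hc_nonneg (.inr (.inl i)) (by simpa using ⟨hi, hi'⟩)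
  · exact hc_zero (.inr (.inr i)) (by simp) (by simp [hi])
  · exact hc_zero (.inr (.inr i)) (by simp) (by simp [hi'.ne'])
  · exact hc_nonneg (.inr (.inr i)) (by simpa using ⟨hi, hi'⟩)
  · simp [hc_sum, Fintype.sum_sum_type, add_assoc]

end MPVC

theorem mpvc_strong_stationarity_general {n m l : ℕ}
    (f : EuclideanSpace ℝ (Fin n) → ℝ)
    (g : EuclideanSpace ℝ (Fin n) → EuclideanSpace ℝ (Fin m))
    (G H : Fin l → EuclideanSpace ℝ (Fin n) → ℝ)
    (C : Set (EuclideanSpace ℝ (Fin n)))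
    (hf : ContDiff ℝ 2 f)
    (hG : ∀ i, ContDiff ℝ 2 (G i)) (hH : ∀ i, ContDiff ℝ 2 (H i))
    -- the feasible set M of (MPVC)
    (M : Set (EuclideanSpace ℝ (Fin n)))
    (hM : M = {x | x ∈ C ∧ g x = 0 ∧ ∀ i, 0 ≤ H i x ∧ 0 ≤ G i x * H i x})
    (xstar : EuclideanSpace ℝ (Fin n))
    -- x* is a local minimizer of (MPVC)
    (hmin : ∃ ε > 0, ∀ x ∈ M, dist x xstar < ε → f xstar ≤ f x)
    -- the linearized cone L(x*)
    (L : Set (EuclideanSpace ℝ (Fin n)))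
    (hL : L = {d | (∀ j, inner ℝ (gradient (fun x => g x j) xstar) d = (0 : ℝ)) ∧
      (∀ i, H i xstar = 0 → G i xstar < 0 →
        inner ℝ (gradient (H i) xstar) d = (0 : ℝ)) ∧
      (∀ i, H i xstar = 0 → 0 ≤ G i xstar →
        inner ℝ (gradient (H i) xstar) d ≤ (0 : ℝ)) ∧
      (∀ i, 0 < H i xstar → G i xstar = 0 →
        inner ℝ (gradient (G i) xstar) d ≤ (0 : ℝ))})
    -- Guignard constraint qualification
    (hGCQ : polarCone (tcone M xstar) = polarCone L) :
    ∃ (y : Fin m → ℝ) (ηH ηG : Fin l → ℝ),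
      (∀ i, 0 < H i xstar → ηH i = 0) ∧
      (∀ i, H i xstar = 0 → 0 ≤ G i xstar → ηH i ≤ 0) ∧
      (∀ i, H i xstar = 0 → ηG i = 0) ∧
      (∀ i, 0 < H i xstar → 0 < G i xstar → ηG i = 0) ∧
      (∀ i, 0 < H i xstar → G i xstar = 0 → ηG i ≤ 0) ∧
      (-(gradient f xstar) - ∑ j, y j • gradient (fun x => g x j) xstar
          - ∑ i, ηH i • gradient (H i) xstar - ∑ i, ηG i • gradient (G i) xstar)
        ∈ polarCone (tcone C xstar) := by
  subst hL
  have hM_constr : ∀ x ∈ M, ∀ i, 0 ≤ H i x ∧ 0 ≤ G i x * H i x := hM ▸ fun _ hx => hx.2.2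
  have hL_nonneg : ∀ φ, ContDiff ℝ 2 φ → IsLocalMinOn φ M xstar →
      ∀ d ∈ mpvcLinearizedCone g G H xstar, 0 ≤ ⟪gradient φ xstar, d⟫_ℝ := fun φ hφ hφmin =>
    inner_nonneg_of_polarCone_eq hGCQ fun _ hd => hφmin.inner_gradient_nonneg_of_mem_tcone
      (hφ.differentiable two_ne_zero).differentiableAt hd
  have hfmin : IsLocalMinOn f M xstar := by
    obtain ⟨ε, hε, hε_min⟩ := hmin
    exact eventually_nhdsWithin_iff.mpr
      (Metric.eventually_nhds_iff.mpr ⟨ε, hε, fun x hx hxM => hε_min x hxM hx⟩)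
  have hHmin : ∀ i, H i xstar = 0 → IsLocalMinOn (H i) M xstar := fun i hi =>
    IsMinOn.localize fun x hx => hi ▸ (hM_constr x hx i).1
  have hGmin : ∀ i, 0 < H i xstar → G i xstar = 0 → IsLocalMinOn (G i) M xstar := fun i =>
    isLocalMinOn_of_mul_nonneg (fun x hx => (hM_constr x hx i).2) (hH i).continuous.continuousAt
  have hf_polar : gradient f xstar ∈ polarCone (mpvcLinearizedCone g G H xstar) := fun d hd => by
    simpa [inner_neg_right] using hL_nonneg f hf hfmin (-d) (neg_mem_mpvcLinearizedCone
      (fun i hi => hL_nonneg _ (hH i) (hHmin i hi) d hd)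
      (fun i hHi hGi => hL_nonneg _ (hG i) (hGmin i hHi hGi) d hd) hd)
  obtain ⟨y, ηH, ηG, hηH_pos, hηH_nonneg, hηG_zero, hηG_pos, hηG_nonneg, hsum⟩ :=
    exists_eq_sum_of_mem_polarCone_mpvcLinearizedCone hf_polar
  refine ⟨-y, -ηH, -ηG, fun i hi => by simp [hηH_pos i hi],
    fun i hi hi' => by simp [hηH_nonneg i hi hi'], fun i hi => by simp [hηG_zero i hi],
    fun i hi hi' => by simp [hηG_pos i hi hi'], fun i hi hi' => by simp [hηG_nonneg i hi hi'], ?_⟩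
  have hzero : -(gradient f xstar) - ∑ j, (-y) j • gradient (fun x => g x j) xstar
      - ∑ i, (-ηH) i • gradient (H i) xstar - ∑ i, (-ηG) i • gradient (G i) xstar = 0 := by
    simp only [hsum, neg_add_rev, Pi.neg_apply, neg_smul, Finset.sum_neg_distrib, sub_neg_eq_add]
    abel
  exact hzero ▸ fun v _ => (inner_zero_left v).le

/-- if `x*` is a local minimizer of (MPVC) at which the Guignard
constraint qualification `T(M,x*)⁻ = L(x*)⁻` holds, then there are multipliers
`y* ∈ ℝᵐ`, `η_H, η_G ∈ ℝˡ` with the stated sign conditions such that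
`-∇f(x*) - Σ y*_j ∇g_j(x*) - Σ (η_H)_i ∇H_i(x*) - Σ (η_G)_i ∇G_i(x*) ∈ T(C,x*)⁻`. -/
theorem mpvc_strong_stationarity {n m l : ℕ}
    (f : EuclideanSpace ℝ (Fin n) → ℝ)
    (g : EuclideanSpace ℝ (Fin n) → EuclideanSpace ℝ (Fin m))
    (G H : Fin l → EuclideanSpace ℝ (Fin n) → ℝ)
    (C : Set (EuclideanSpace ℝ (Fin n)))
    (hf : ContDiff ℝ 2 f) (hg : ContDiff ℝ 2 g)
    (hG : ∀ i, ContDiff ℝ 2 (G i)) (hH : ∀ i, ContDiff ℝ 2 (H i))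
    (hCne : C.Nonempty) (hCcl : IsClosed C) (hCcv : Convex ℝ C)
    -- the feasible set M of (MPVC)
    (M : Set (EuclideanSpace ℝ (Fin n)))
    (hM : M = {x | x ∈ C ∧ g x = 0 ∧ ∀ i, 0 ≤ H i x ∧ 0 ≤ G i x * H i x})
    (xstar : EuclideanSpace ℝ (Fin n))
    -- x* is a local minimizer of (MPVC)
    (hfeas : xstar ∈ M)
    (hmin : ∃ ε > 0, ∀ x ∈ M, dist x xstar < ε → f xstar ≤ f x)
    -- the linearized cone L(x*)
    (L : Set (EuclideanSpace ℝ (Fin n)))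
    (hL : L = {d | (∀ j, inner ℝ (gradient (fun x => g x j) xstar) d = (0 : ℝ)) ∧
      (∀ i, H i xstar = 0 → G i xstar < 0 →
        inner ℝ (gradient (H i) xstar) d = (0 : ℝ)) ∧
      (∀ i, H i xstar = 0 → 0 ≤ G i xstar →
        inner ℝ (gradient (H i) xstar) d ≤ (0 : ℝ)) ∧
      (∀ i, 0 < H i xstar → G i xstar = 0 →
        inner ℝ (gradient (G i) xstar) d ≤ (0 : ℝ))})
    -- Guignard constraint qualification
    (hGCQ : polarCone (tcone M xstar) = polarCone L) :
    ∃ (y : Fin m → ℝ) (ηH ηG : Fin l → ℝ),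
      (∀ i, 0 < H i xstar → ηH i = 0) ∧
      (∀ i, H i xstar = 0 → 0 ≤ G i xstar → ηH i ≤ 0) ∧
      (∀ i, H i xstar = 0 → ηG i = 0) ∧
      (∀ i, 0 < H i xstar → 0 < G i xstar → ηG i = 0) ∧
      (∀ i, 0 < H i xstar → G i xstar = 0 → ηG i ≤ 0) ∧
      (-(gradient f xstar) - ∑ j, y j • gradient (fun x => g x j) xstar
          - ∑ i, ηH i • gradient (H i) xstar - ∑ i, ηG i • gradient (G i) xstar)
        ∈ polarCone (tcone C xstar) :=
  mpvc_strong_stationarity_general f g G H C hf hG hH M hM xstar hmin L hL hGCQ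
end
end

section
/- Let C ⊆ ℝⁿ be nonempty, closed and convex, let f : ℝⁿ → ℝ and c : ℝⁿ → ℝᵐ be continuously differentiable, fix x̂ ∈ ℝⁿ, ŷ ∈ ℝᵐ, λ > 0, ρ ≥ 0, and set Δt = 1/λ. A pair (x, w) ∈ C × ℝᵐ satisfies the first-order (KKT) conditions of (Sub-NLP), namely c(x) + λw = 0 together with the existence of μ ∈ ℝᵐ such that λ(w − ŷ) + λμ = 0 and −∇f^ρ(x) − λ(x − x̂) − J_c(x)ᵀμ belongs to the normal cone T(C,x)⁻, if and only if, with y := ŷ − w, the projected backward Euler equations hold: x = P_C(x̂ − Δt·∇ₓL^ρ(x, y)) and y = ŷ + Δt·∇_y L^ρ(x, y). -/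
noncomputable section

open Filter Topology

/-! The KKT system and the projected backward Euler step differ only by the positive factor
`Δt = 1/λ`: the multiplier equation forces `μ = ŷ − w = y`, the constraint `c(x) + λw = 0` is
`y = ŷ + Δt c(x)`, and `x̂ − Δt ∇ₓL^ρ(x, y) − x` is `Δt` times the KKT residual
`−∇f^ρ(x) − λ(x − x̂) − J_c(x)ᵀy`. For convex `C` the normal cone `T(C,x)⁻` consists of the `v`
with `⟨v, u − x⟩ ≤ 0` on `C`, which is the variational inequality characterizing `P_C`. -/

section TangentCone

variable {V : Type*} [NormedAddCommGroup V] [InnerProductSpace ℝ V]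

theorem sub_mem_tcone_of_convex {C : Set V} (hC : Convex ℝ C) {x u : V} (hx : x ∈ C)
    (hu : u ∈ C) : u - x ∈ tcone C x := by
  have ht : ∀ k : ℕ, 1 / ((k : ℝ) + 1) ∈ Set.Icc (0 : ℝ) 1 := fun k =>
    ⟨by positivity, (div_le_one (by positivity)).mpr (by simp)⟩
  refine ⟨fun k => x + (1 / ((k : ℝ) + 1)) • (u - x), fun k => (k : ℝ) + 1,
    fun k => hC.add_smul_sub_mem hx hu (ht k), fun k => by positivity, ?_, ?_⟩
  · simpa using
      ((tendsto_one_div_add_atTop_nhds_zero_nat (𝕜 := ℝ)).smul_const (u - x)).const_add x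
  · refine tendsto_const_nhds.congr fun k => ?_
    rw [add_sub_cancel_left, smul_smul, mul_one_div_cancel (by positivity), one_smul]

theorem inner_nonpos_of_mem_tcone {C : Set V} {x v d : V}
    (hv : ∀ u ∈ C, inner ℝ v (u - x) ≤ (0 : ℝ)) (hd : d ∈ tcone C x) :
    inner ℝ v d ≤ (0 : ℝ) := by
  obtain ⟨xs, t, hxs, ht, -, hlim⟩ := hd
  refine le_of_tendsto (tendsto_const_nhds.inner hlim) (Eventually.of_forall fun k => ?_)
  rw [real_inner_smul_right]
  exact mul_nonpos_of_nonneg_of_nonpos (ht k) (hv _ (hxs k))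

theorem mem_polarCone_tcone_iff {C : Set V} (hC : Convex ℝ C) {x : V} (hx : x ∈ C) (v : V) :
    v ∈ polarCone (tcone C x) ↔ ∀ u ∈ C, inner ℝ v (u - x) ≤ (0 : ℝ) :=
  ⟨fun h _ hu => h _ (sub_mem_tcone_of_convex hC hx hu),
    fun h _ hd => inner_nonpos_of_mem_tcone h hd⟩

end TangentCone

theorem gradient_add_inner_comp {F ι : Type*} [NormedAddCommGroup F] [InnerProductSpace ℝ F]
    [CompleteSpace F] [Fintype ι] {g : F → ℝ} {c : F → EuclideanSpace ℝ ι} {x : F}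
    (hg : DifferentiableAt ℝ g x) (hc : DifferentiableAt ℝ c x) (y : EuclideanSpace ℝ ι) :
    gradient (fun z => g z + inner ℝ y (c z)) x
      = gradient g x + ∑ j, y j • gradient (fun z => c z j) x := by
  have hcj : ∀ j, DifferentiableAt ℝ (fun z => c z j) x := fun j => by
    exact (EuclideanSpace.proj j).differentiableAt.comp x hc
  have hinner : (fun z => g z + inner ℝ y (c z)) = fun z => g z + ∑ j, y j * c z j := by
    funext z
    simp [PiLp.inner_apply, mul_comm]
  have hderiv := hg.hasFDerivAt.fun_add
    (HasFDerivAt.fun_sum (u := Finset.univ) fun j _ => ((hcj j).hasFDerivAt.const_mul (y j)))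
  rw [hinner, gradient, hderiv.fderiv]
  simp only [map_add, map_sum, map_smul, gradient]

theorem subnlp_kkt_iff_backward_euler_general {n m : ℕ}
    (C : Set (EuclideanSpace ℝ (Fin n)))
    (hCcv : Convex ℝ C)
    (f : EuclideanSpace ℝ (Fin n) → ℝ)
    (c : EuclideanSpace ℝ (Fin n) → EuclideanSpace ℝ (Fin m))
    (hf : ContDiff ℝ 1 f) (hc : ContDiff ℝ 1 c)
    (xh : EuclideanSpace ℝ (Fin n)) (yh : EuclideanSpace ℝ (Fin m))
    (lam ρ : ℝ) (hlam : 0 < lam)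
    (Δt : ℝ) (hΔt : Δt = 1 / lam)
    (x : EuclideanSpace ℝ (Fin n)) (hx : x ∈ C) (w : EuclideanSpace ℝ (Fin m))
    (y : EuclideanSpace ℝ (Fin m)) (hy : y = yh - w) :
    -- KKT conditions of (Sub-NLP)
    ((c x + lam • w = 0 ∧
      ∃ μ : EuclideanSpace ℝ (Fin m),
        lam • (w - yh) + lam • μ = 0 ∧
        (-(gradient (fun z => f z + ρ / 2 * ‖c z‖ ^ 2) x) - lam • (x - xh)
            - ∑ j, μ j • gradient (fun z => c z j) x)
          ∈ polarCone (tcone C x)) ↔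
    -- projected backward Euler equations
    ((∀ u ∈ C,
        (inner ℝ
          ((xh - Δt • gradient
              (fun z => f z + (inner ℝ y (c z) : ℝ) + ρ / 2 * ‖c z‖ ^ 2) x) - x)
          (u - x) : ℝ) ≤ 0) ∧
      y = yh + Δt • c x)) := by
  have hΔt_pos : 0 < Δt := hΔt ▸ one_div_pos.mpr hlam
  have hΔt_mul : Δt * lam = 1 := by rw [hΔt, one_div_mul_cancel hlam.ne']
  set gρ := gradient (fun z => f z + ρ / 2 * ‖c z‖ ^ 2) x
  set Jy := ∑ j, y j • gradient (fun z => c z j) x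
  have hgrad : gradient (fun z => f z + inner ℝ y (c z) + ρ / 2 * ‖c z‖ ^ 2) x = gρ + Jy := by
    have hL : (fun z => f z + inner ℝ y (c z) + ρ / 2 * ‖c z‖ ^ 2)
        = fun z => (f z + ρ / 2 * ‖c z‖ ^ 2) + inner ℝ y (c z) := by
      funext z
      ring
    rw [hL]
    have hcd := hc.differentiable one_ne_zero x
    exact gradient_add_inner_comp
      ((hf.differentiable one_ne_zero x).add ((hcd.norm_sq ℝ).const_mul _)) hcd y
  have hdual (μ : EuclideanSpace ℝ (Fin m)) : lam • (w - yh) + lam • μ = 0 ↔ μ = y := by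
    rw [← smul_add, smul_eq_zero_iff_right hlam.ne', hy, ← eq_neg_iff_add_eq_zero,
      ← neg_sub yh w, neg_inj, eq_comm]
  have hprimal : c x + lam • w = 0 ↔ y = yh + Δt • c x := by
    rw [hy, sub_eq_add_neg, add_right_inj, add_eq_zero_iff_eq_neg', ← smul_right_inj hΔt_pos.ne',
      smul_neg, smul_smul, hΔt_mul, one_smul, neg_eq_iff_eq_neg, eq_comm]
  have hstep : xh - Δt • (gρ + Jy) - x = Δt • (-gρ - lam • (x - xh) - Jy) := by
    rw [smul_sub, smul_sub, smul_smul, hΔt_mul, one_smul]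
    module
  rw [hgrad, hstep, hprimal]
  simp only [hdual, exists_eq_left, mem_polarCone_tcone_iff hCcv hx, real_inner_smul_left,
    ← smul_eq_mul, smul_nonpos_iff_nonpos_of_pos_left hΔt_pos]
  exact and_comm

/-- a pair `(x, w) ∈ C × ℝᵐ` satisfies the first-order KKT conditions
of (Sub-NLP) iff, with `y := ŷ − w`, the projected backward Euler equations
`x = P_C(x̂ − Δt·∇ₓL^ρ(x,y))` and `y = ŷ + Δt·∇_y L^ρ(x,y)` hold (with `Δt = 1/λ`,
and `P_C(z) = x` characterized by `x ∈ C` and `⟨z − x, u − x⟩ ≤ 0` for all `u ∈ C`). -/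
theorem subnlp_kkt_iff_backward_euler {n m : ℕ}
    (C : Set (EuclideanSpace ℝ (Fin n)))
    (hCne : C.Nonempty) (hCcl : IsClosed C) (hCcv : Convex ℝ C)
    (f : EuclideanSpace ℝ (Fin n) → ℝ)
    (c : EuclideanSpace ℝ (Fin n) → EuclideanSpace ℝ (Fin m))
    (hf : ContDiff ℝ 1 f) (hc : ContDiff ℝ 1 c)
    (xh : EuclideanSpace ℝ (Fin n)) (yh : EuclideanSpace ℝ (Fin m))
    (lam ρ : ℝ) (hlam : 0 < lam) (hρ : 0 ≤ ρ)
    (Δt : ℝ) (hΔt : Δt = 1 / lam)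
    (x : EuclideanSpace ℝ (Fin n)) (hx : x ∈ C) (w : EuclideanSpace ℝ (Fin m))
    (y : EuclideanSpace ℝ (Fin m)) (hy : y = yh - w) :
    -- KKT conditions of (Sub-NLP)
    ((c x + lam • w = 0 ∧
      ∃ μ : EuclideanSpace ℝ (Fin m),
        lam • (w - yh) + lam • μ = 0 ∧
        (-(gradient (fun z => f z + ρ / 2 * ‖c z‖ ^ 2) x) - lam • (x - xh)
            - ∑ j, μ j • gradient (fun z => c z j) x)
          ∈ polarCone (tcone C x)) ↔
    -- projected backward Euler equations
    ((∀ u ∈ C,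
        (inner ℝ
          ((xh - Δt • gradient
              (fun z => f z + (inner ℝ y (c z) : ℝ) + ρ / 2 * ‖c z‖ ^ 2) x) - x)
          (u - x) : ℝ) ≤ 0) ∧
      y = yh + Δt • c x)) :=
  subnlp_kkt_iff_backward_euler_general C hCcv f c hf hc xh yh lam ρ hlam Δt hΔt x hx w y hy
end
end

section
/- Let (x*, s*, y*) with y* = (y_g, y_H, y_G) ∈ ℝᵐ × ℝˡ × ℝˡ be a strong stationary point of (MPVCS), meaning: (x*, s*) is feasible for (MPVCS); −∇ₓ[f + ⟨y_g, g⟩ + Σᵢ y_{H,i} H_i + Σᵢ y_{G,i} G_i](x*) ∈ T(C, x*)⁻; and the multipliers satisfy y_{H,i} = 0 for i ∈ I₊, y_{H,i} ≤ 0 for i ∈ I₀₀ ∪ I₀₊, y_{G,i} = 0 for i ∈ I₀ ∪ I₊₊, and y_{G,i} ≤ 0 for i ∈ I₊₀ (index sets evaluated at x*). Then for every signature σ ∈ {0,1}ˡ with s* ∈ C^b(σ): −∇_{(x,s)} L^ρ(x*, s*, y*) ∈ T(C × C^b(σ), (x*, s*))⁻ (equivalently, the metric projection of −∇_{(x,s)}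 L^ρ(x*, s*, y*) onto the tangent cone T(C × C^b(σ), (x*, s*)) is zero), and ∇_y L^ρ(x*, s*, y*) = 0; i.e., (x*, s*, y*) is an equilibrium point of the branch gradient/anti-gradient flow for every compatible signature. -/
noncomputable section

open Filter Topology

/-- The Euclidean inner product on the product space `ℝⁿ × (ℝˡ × ℝˡ)` of the primal
variable and the two slack blocks. -/
def pInner {n l : ℕ}
    (a b : EuclideanSpace ℝ (Fin n) × EuclideanSpace ℝ (Fin l) × EuclideanSpace ℝ (Fin l)) :
    ℝ :=
  inner ℝ a.1 b.1 + inner ℝ a.2.1 b.2.1 + inner ℝ a.2.2 b.2.2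

/-- The branch set `C^b(σ)`: for each `i`, `s_{H,i} ≥ 0 ∧ s_{G,i} ≥ 0` if `σ_i = 1`,
and `s_{H,i} = 0 ∧ s_{G,i} ≤ 0` if `σ_i = 0`. -/
def branchSet {l : ℕ} (σ : Fin l → Bool) :
    Set (EuclideanSpace ℝ (Fin l) × EuclideanSpace ℝ (Fin l)) :=
  {s | ∀ i, (σ i = true → 0 ≤ s.1 i ∧ 0 ≤ s.2 i) ∧
            (σ i = false → s.1 i = 0 ∧ s.2 i ≤ 0)}

/-- The augmented Lagrangian `L^ρ(x, s, y)` of (MPVCS) with multiplier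
`y = (y_g, y_H, y_G)`. -/
def Lrho {n m l : ℕ} (f : EuclideanSpace ℝ (Fin n) → ℝ)
    (g : EuclideanSpace ℝ (Fin n) → EuclideanSpace ℝ (Fin m))
    (G H : Fin l → EuclideanSpace ℝ (Fin n) → ℝ) (ρ : ℝ)
    (yg : EuclideanSpace ℝ (Fin m)) (yH yG : EuclideanSpace ℝ (Fin l))
    (x : EuclideanSpace ℝ (Fin n)) (sH sG : EuclideanSpace ℝ (Fin l)) : ℝ :=
  f x + (inner ℝ yg (g x) : ℝ) + (∑ i, yH i * (H i x - sH i)) + (∑ i, yG i * (G i x - sG i))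
    + ρ / 2 * (‖g x‖ ^ 2 + (∑ i, (H i x - sH i) ^ 2) + ∑ i, (G i x - sG i) ^ 2)

/-!
At a feasible point every component of `c(x, s)` vanishes, so the penalty `‖c‖²` has zero
derivative there and `∇_{(x,s)} L^ρ = ∇_{(x,s)} L`: its `x`-part is the stationarity vector of
the hypothesis and its slack parts are `-y_H` and `-y_G`. A tangent vector `v` to `C × C^b(σ)`
splits into a tangent vector to `C` and one to `C^b(σ)`, and every linear constraint of
`C^b(σ)` that is active at `s*` remains valid for the latter. The multiplier sign conditions
are exactly what makes `⟪y_H, v_H⟫ ≤ 0` and `⟪y_G, v_G⟫ ≤ 0` under these constraints.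
-/

open Set InnerProductSpace

section TangentCone

variable {V W : Type*} [NormedAddCommGroup V] [NormedSpace ℝ V]
  [NormedAddCommGroup W] [NormedSpace ℝ W]

theorem map_mem_tcone {S : Set V} {T : Set W} {x v : V} (L : V →L[ℝ] W) (hST : MapsTo L S T)
    (hv : v ∈ tcone S x) : L v ∈ tcone T (L x) := by
  obtain ⟨xs, lam, hxs, hlam, hx, hd⟩ := hv
  refine ⟨fun k => L (xs k), lam, fun k => hST (hxs k), hlam, (L.continuous.tendsto x).comp hx, ?_⟩
  simpa only [Function.comp_def, map_sub, map_smul] using (L.continuous.tendsto v).comp hd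

theorem fst_mem_tcone_prod {S : Set V} {T : Set W} {a : V} {b : W} {v : V × W}
    (hv : v ∈ tcone (S ×ˢ T) (a, b)) : v.1 ∈ tcone S a :=
  map_mem_tcone (ContinuousLinearMap.fst ℝ V W) (fun _ hp => hp.1) hv

theorem snd_mem_tcone_prod {S : Set V} {T : Set W} {a : V} {b : W} {v : V × W}
    (hv : v ∈ tcone (S ×ˢ T) (a, b)) : v.2 ∈ tcone T b :=
  map_mem_tcone (ContinuousLinearMap.snd ℝ V W) (fun _ hp => hp.2) hv

theorem nonneg_of_mem_tcone {S : Set V} {x v : V} (φ : V →L[ℝ] ℝ) (hS : ∀ p ∈ S, 0 ≤ φ p)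
    (hx : φ x = 0) (hv : v ∈ tcone S x) : 0 ≤ φ v := by
  obtain ⟨xs, lam, hxs, hlam, -, hd⟩ := hv
  refine ge_of_tendsto' ((φ.continuous.tendsto v).comp hd) fun k => ?_
  simpa [hx] using mul_nonneg (hlam k) (hS _ (hxs k))

theorem eq_zero_of_mem_tcone {S : Set V} {x v : V} (φ : V →L[ℝ] ℝ) (hS : ∀ p ∈ S, φ p = 0)
    (hx : φ x = 0) (hv : v ∈ tcone S x) : φ v = 0 := by
  have h₁ := nonneg_of_mem_tcone φ (fun p hp => (hS p hp).ge) hx hv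
  have h₂ := nonneg_of_mem_tcone (-φ) (fun p hp => by simp [hS p hp]) (by simp [hx]) hv
  simp only [neg_apply, neg_nonneg] at h₂
  exact le_antisymm h₂ h₁

end TangentCone

section BranchSet

variable {l : ℕ} {σ : Fin l → Bool} {s v : EuclideanSpace ℝ (Fin l) × EuclideanSpace ℝ (Fin l)}

theorem fst_nonneg_of_mem_branchSet (hs : s ∈ branchSet σ) (i : Fin l) : 0 ≤ s.1 i := by
  cases h : σ i
  · exact ((hs i).2 h).1.ge
  · exact ((hs i).1 h).1

theorem fst_eq_zero_of_mem_tcone_branchSet (hs : s ∈ branchSet σ) (hv : v ∈ tcone (branchSet σ) s)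
    {i : Fin l} (hi : σ i = false) : v.1 i = 0 :=
  eq_zero_of_mem_tcone ((EuclideanSpace.proj i).comp (ContinuousLinearMap.fst ℝ _ _) : _ →L[ℝ] ℝ)
    (fun _ hp => ((hp i).2 hi).1) ((hs i).2 hi).1 hv

theorem fst_nonneg_of_mem_tcone_branchSet (hv : v ∈ tcone (branchSet σ) s) {i : Fin l}
    (hi : σ i = true) (hs : s.1 i = 0) : 0 ≤ v.1 i :=
  nonneg_of_mem_tcone ((EuclideanSpace.proj i).comp (ContinuousLinearMap.fst ℝ _ _) : _ →L[ℝ] ℝ)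
    (fun _ hp => ((hp i).1 hi).1) hs hv

theorem snd_nonneg_of_mem_tcone_branchSet (hv : v ∈ tcone (branchSet σ) s) {i : Fin l}
    (hi : σ i = true) (hs : s.2 i = 0) : 0 ≤ v.2 i :=
  nonneg_of_mem_tcone ((EuclideanSpace.proj i).comp (ContinuousLinearMap.snd ℝ _ _) : _ →L[ℝ] ℝ)
    (fun _ hp => ((hp i).1 hi).2) hs hv

theorem inner_fst_nonpos_of_mem_tcone_branchSet {y : EuclideanSpace ℝ (Fin l)}
    (hs : s ∈ branchSet σ) (hv : v ∈ tcone (branchSet σ) s)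
    (hy_pos : ∀ i, 0 < s.1 i → y i = 0) (hy_zero : ∀ i, s.1 i = 0 → 0 ≤ s.2 i → y i ≤ 0) :
    inner ℝ y v.1 ≤ 0 := by
  refine Finset.sum_nonpos fun i _ => ?_
  rcases (fst_nonneg_of_mem_branchSet hs i).eq_or_lt with h₀ | hpos
  · cases hi : σ i
    · simp [fst_eq_zero_of_mem_tcone_branchSet hs hv hi]
    · exact mul_nonpos_of_nonneg_of_nonpos (fst_nonneg_of_mem_tcone_branchSet hv hi h₀.symm)
        (hy_zero i h₀.symm ((hs i).1 hi).2)
  · simp [hy_pos i hpos]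

theorem inner_snd_nonpos_of_mem_tcone_branchSet {y : EuclideanSpace ℝ (Fin l)}
    (hs : s ∈ branchSet σ) (hv : v ∈ tcone (branchSet σ) s)
    (hy_zero : ∀ i, s.1 i = 0 → y i = 0) (hy_pos_pos : ∀ i, 0 < s.1 i → 0 < s.2 i → y i = 0)
    (hy_pos_zero : ∀ i, 0 < s.1 i → s.2 i = 0 → y i ≤ 0) :
    inner ℝ y v.2 ≤ 0 := by
  refine Finset.sum_nonpos fun i _ => ?_
  rcases (fst_nonneg_of_mem_branchSet hs i).eq_or_lt with h₀ | hpos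
  · simp [hy_zero i h₀.symm]
  · have hi : σ i = true := by
      by_contra hi
      exact hpos.ne' ((hs i).2 (by simpa using hi)).1
    rcases ((hs i).1 hi).2.eq_or_lt with h₀' | hpos'
    · exact mul_nonpos_of_nonneg_of_nonpos (snd_nonneg_of_mem_tcone_branchSet hv hi h₀'.symm)
        (hy_pos_zero i hpos h₀'.symm)
    · simp [hy_pos_pos i hpos hpos']

end BranchSet

section Calculus

variable {V : Type*} [NormedAddCommGroup V] [NormedSpace ℝ V]

theorem hasFDerivAt_sum_sq_of_eq_zero {ι : Type*} [Fintype ι] {φ : ι → V → ℝ} {x : V}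
    (hφ : ∀ i, DifferentiableAt ℝ (φ i) x) (h₀ : ∀ i, φ i x = 0) :
    HasFDerivAt (fun y => ∑ i, φ i y ^ 2) (0 : V →L[ℝ] ℝ) x := by
  simpa [h₀] using HasFDerivAt.fun_sum fun i _ => (hφ i).hasFDerivAt.pow 2

theorem HasFDerivAt.add_const_mul_of_hasFDerivAt_zero {F P : V → ℝ} {F' : V →L[ℝ] ℝ} {x : V}
    (hF : HasFDerivAt F F' x) (hP : HasFDerivAt P (0 : V →L[ℝ] ℝ) x) (c : ℝ) :
    HasFDerivAt (fun y => F y + c * P y) F' x := by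
  simpa using hF.fun_add (hP.const_mul c)

theorem hasGradientAt_sum_mul_sub {ι : Type*} [Fintype ι] (y : EuclideanSpace ℝ ι) (c : ι → ℝ)
    (s : EuclideanSpace ℝ ι) :
    HasGradientAt (fun s : EuclideanSpace ℝ ι => ∑ i, y i * (c i - s i)) (-y) s := by
  have h : (fun s : EuclideanSpace ℝ ι => ∑ i, y i * (c i - s i))
      = fun s => ∑ i, y i * c i - innerSL ℝ y s := by
    funext s
    simp [PiLp.inner_apply, mul_sub, Finset.sum_sub_distrib, mul_comm]
  rw [h, hasGradientAt_iff_hasFDerivAt]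
  refine (((innerSL ℝ y).hasFDerivAt (x := s)).const_sub _).congr_fderiv ?_
  ext v
  simp

end Calculus

section AugmentedLagrangian

variable {n m l : ℕ} (f : EuclideanSpace ℝ (Fin n) → ℝ)
  (g : EuclideanSpace ℝ (Fin n) → EuclideanSpace ℝ (Fin m))
  (G H : Fin l → EuclideanSpace ℝ (Fin n) → ℝ)
  (yg : EuclideanSpace ℝ (Fin m)) (yH yG : EuclideanSpace ℝ (Fin l))

def lagrangian (x : EuclideanSpace ℝ (Fin n)) (sH sG : EuclideanSpace ℝ (Fin l)) : ℝ :=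
  f x + (inner ℝ yg (g x) : ℝ) + (∑ i, yH i * (H i x - sH i)) + (∑ i, yG i * (G i x - sG i))

def penalty (x : EuclideanSpace ℝ (Fin n)) (sH sG : EuclideanSpace ℝ (Fin l)) : ℝ :=
  ‖g x‖ ^ 2 + (∑ i, (H i x - sH i) ^ 2) + ∑ i, (G i x - sG i) ^ 2

theorem Lrho_eq_lagrangian_add_penalty (ρ : ℝ) (x : EuclideanSpace ℝ (Fin n))
    (sH sG : EuclideanSpace ℝ (Fin l)) :
    Lrho f g G H ρ yg yH yG x sH sG
      = lagrangian f g G H yg yH yG x sH sG + ρ / 2 * penalty g G H x sH sG :=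
  rfl

variable {f g G H yg yH yG} {x : EuclideanSpace ℝ (Fin n)} {sH sG : EuclideanSpace ℝ (Fin l)}

theorem hasFDerivAt_penalty_x (hg : DifferentiableAt ℝ g x)
    (hG : ∀ i, DifferentiableAt ℝ (G i) x) (hH : ∀ i, DifferentiableAt ℝ (H i) x)
    (hgx : g x = 0) (hH0 : ∀ i, H i x - sH i = 0) (hG0 : ∀ i, G i x - sG i = 0) :
    HasFDerivAt (fun x => penalty g G H x sH sG) (0 : EuclideanSpace ℝ (Fin n) →L[ℝ] ℝ) x := by
  have hnorm : HasFDerivAt (fun x => ‖g x‖ ^ 2) (0 : EuclideanSpace ℝ (Fin n) →L[ℝ] ℝ) x := by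
    simpa [hgx] using hg.hasFDerivAt.norm_sq
  unfold penalty
  simpa using (hnorm.fun_add
    (hasFDerivAt_sum_sq_of_eq_zero (fun i => (hH i).sub_const (sH i)) hH0)).fun_add
    (hasFDerivAt_sum_sq_of_eq_zero (fun i => (hG i).sub_const (sG i)) hG0)

theorem hasFDerivAt_penalty_sH (hH0 : ∀ i, H i x - sH i = 0) :
    HasFDerivAt (fun s => penalty g G H x s sG) (0 : EuclideanSpace ℝ (Fin l) →L[ℝ] ℝ) sH := by
  have h := hasFDerivAt_sum_sq_of_eq_zero
    (φ := fun i (s : EuclideanSpace ℝ (Fin l)) => H i x - s i) (fun i => by fun_prop) hH0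
  unfold penalty
  simpa using h

theorem hasFDerivAt_penalty_sG (hG0 : ∀ i, G i x - sG i = 0) :
    HasFDerivAt (fun s => penalty g G H x sH s) (0 : EuclideanSpace ℝ (Fin l) →L[ℝ] ℝ) sG := by
  have h := hasFDerivAt_sum_sq_of_eq_zero
    (φ := fun i (s : EuclideanSpace ℝ (Fin l)) => G i x - s i) (fun i => by fun_prop) hG0
  unfold penalty
  simpa using h

theorem hasFDerivAt_lagrangian_x {F' : EuclideanSpace ℝ (Fin n) →L[ℝ] ℝ}
    (hF : HasFDerivAt (fun x => f x + (inner ℝ yg (g x) : ℝ)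
      + (∑ i, yH i * H i x) + ∑ i, yG i * G i x) F' x) :
    HasFDerivAt (fun x => lagrangian f g G H yg yH yG x sH sG) F' x := by
  have h : (fun x => lagrangian f g G H yg yH yG x sH sG) = fun x => (f x + (inner ℝ yg (g x) : ℝ)
      + (∑ i, yH i * H i x) + ∑ i, yG i * G i x) - ((∑ i, yH i * sH i) + ∑ i, yG i * sG i) := by
    funext x
    simp only [lagrangian, mul_sub, Finset.sum_sub_distrib]
    ring
  rw [h]
  exact hF.sub_const _

theorem hasGradientAt_lagrangian_sH :
    HasGradientAt (fun s => lagrangian f g G H yg yH yG x s sG) (-yH) sH := by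
  have h := hasGradientAt_sum_mul_sub yH (fun i => H i x) sH
  rw [hasGradientAt_iff_hasFDerivAt] at h ⊢
  exact (h.const_add _).add_const _

theorem hasGradientAt_lagrangian_sG :
    HasGradientAt (fun s => lagrangian f g G H yg yH yG x sH s) (-yG) sG := by
  have h := hasGradientAt_sum_mul_sub yG (fun i => G i x) sG
  rw [hasGradientAt_iff_hasFDerivAt] at h ⊢
  exact h.const_add _

theorem gradient_Lrho_x (ρ : ℝ) (hf : DifferentiableAt ℝ f x) (hg : DifferentiableAt ℝ g x)
    (hG : ∀ i, DifferentiableAt ℝ (G i) x) (hH : ∀ i, DifferentiableAt ℝ (H i) x)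
    (hgx : g x = 0) (hH0 : ∀ i, H i x - sH i = 0) (hG0 : ∀ i, G i x - sG i = 0) :
    gradient (fun x => Lrho f g G H ρ yg yH yG x sH sG) x
      = gradient (fun x => f x + (inner ℝ yg (g x) : ℝ)
          + (∑ i, yH i * H i x) + ∑ i, yG i * G i x) x := by
  have hinner : DifferentiableAt ℝ (fun x => (inner ℝ yg (g x) : ℝ)) x :=
    (differentiableAt_const yg).inner ℝ hg
  have hF : DifferentiableAt ℝ (fun x => f x + (inner ℝ yg (g x) : ℝ)
      + (∑ i, yH i * H i x) + ∑ i, yG i * G i x) x := by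
    fun_prop
  simp_rw [Lrho_eq_lagrangian_add_penalty]
  refine HasGradientAt.gradient (hasGradientAt_iff_hasFDerivAt.mpr ?_)
  exact (hasFDerivAt_lagrangian_x hF.hasGradientAt.hasFDerivAt).add_const_mul_of_hasFDerivAt_zero
    (hasFDerivAt_penalty_x hg hG hH hgx hH0 hG0) (ρ / 2)

theorem gradient_Lrho_sH (ρ : ℝ) (hH0 : ∀ i, H i x - sH i = 0) :
    gradient (fun s => Lrho f g G H ρ yg yH yG x s sG) sH = -yH := by
  simp_rw [Lrho_eq_lagrangian_add_penalty]
  refine HasGradientAt.gradient (hasGradientAt_iff_hasFDerivAt.mpr ?_)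
  exact hasGradientAt_lagrangian_sH.hasFDerivAt.add_const_mul_of_hasFDerivAt_zero
    (hasFDerivAt_penalty_sH hH0) (ρ / 2)

theorem gradient_Lrho_sG (ρ : ℝ) (hG0 : ∀ i, G i x - sG i = 0) :
    gradient (fun s => Lrho f g G H ρ yg yH yG x sH s) sG = -yG := by
  simp_rw [Lrho_eq_lagrangian_add_penalty]
  refine HasGradientAt.gradient (hasGradientAt_iff_hasFDerivAt.mpr ?_)
  exact hasGradientAt_lagrangian_sG.hasFDerivAt.add_const_mul_of_hasFDerivAt_zero
    (hasFDerivAt_penalty_sG hG0) (ρ / 2)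

end AugmentedLagrangian

theorem strong_stationary_is_equilibrium_general {n m l : ℕ}
    (f : EuclideanSpace ℝ (Fin n) → ℝ)
    (g : EuclideanSpace ℝ (Fin n) → EuclideanSpace ℝ (Fin m))
    (G H : Fin l → EuclideanSpace ℝ (Fin n) → ℝ)
    (C : Set (EuclideanSpace ℝ (Fin n))) (ρ : ℝ)
    (hf : ContDiff ℝ 2 f) (hg : ContDiff ℝ 2 g)
    (hG : ∀ i, ContDiff ℝ 2 (G i)) (hH : ∀ i, ContDiff ℝ 2 (H i))
    (xstar : EuclideanSpace ℝ (Fin n)) (sH sG : EuclideanSpace ℝ (Fin l))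
    (yg : EuclideanSpace ℝ (Fin m)) (yH yG : EuclideanSpace ℝ (Fin l))
    -- (x*, s*) is feasible for (MPVCS)
    (hgx : g xstar = 0)
    (hH0 : ∀ i, H i xstar - sH i = 0) (hG0 : ∀ i, G i xstar - sG i = 0)
    -- strong stationarity in x
    (hstat : -(gradient (fun x => f x + (inner ℝ yg (g x) : ℝ)
          + (∑ i, yH i * H i x) + ∑ i, yG i * G i x) xstar)
        ∈ polarCone (tcone C xstar))
    -- multiplier sign conditions
    (hyH_plus : ∀ i, 0 < H i xstar → yH i = 0)
    (hyH_00_0p : ∀ i, H i xstar = 0 → 0 ≤ G i xstar → yH i ≤ 0)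
    (hyG_0 : ∀ i, H i xstar = 0 → yG i = 0)
    (hyG_pp : ∀ i, 0 < H i xstar → 0 < G i xstar → yG i = 0)
    (hyG_p0 : ∀ i, 0 < H i xstar → G i xstar = 0 → yG i ≤ 0) :
    ∀ σ : Fin l → Bool, (sH, sG) ∈ branchSet σ →
      ((-(gradient (fun x => Lrho f g G H ρ yg yH yG x sH sG) xstar),
        -(gradient (fun s => Lrho f g G H ρ yg yH yG xstar s sG) sH),
        -(gradient (fun s => Lrho f g G H ρ yg yH yG xstar sH s) sG))
          ∈ {d | ∀ v ∈ tcone (C ×ˢ branchSet σ) (xstar, (sH, sG)), pInner d v ≤ 0}) ∧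
      g xstar = 0 ∧ (∀ i, H i xstar - sH i = 0) ∧ (∀ i, G i xstar - sG i = 0) := by
  intro σ hσ
  refine ⟨fun v hv => ?_, hgx, hH0, hG0⟩
  have hHs : ∀ i, H i xstar = sH i := fun i => sub_eq_zero.mp (hH0 i)
  have hGs : ∀ i, G i xstar = sG i := fun i => sub_eq_zero.mp (hG0 i)
  simp only [hHs, hGs] at hyH_plus hyH_00_0p hyG_0 hyG_pp hyG_p0
  have hv₂ := snd_mem_tcone_prod hv
  have hx := hstat v.1 (fst_mem_tcone_prod hv)
  have hvH := inner_fst_nonpos_of_mem_tcone_branchSet hσ hv₂ hyH_plus hyH_00_0p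
  have hvG := inner_snd_nonpos_of_mem_tcone_branchSet hσ hv₂ hyG_0 hyG_pp hyG_p0
  rw [gradient_Lrho_x ρ (hf.differentiable two_ne_zero xstar)
    (hg.differentiable two_ne_zero xstar) (fun i => (hG i).differentiable two_ne_zero xstar)
    (fun i => (hH i).differentiable two_ne_zero xstar) hgx hH0 hG0,
    gradient_Lrho_sH ρ hH0, gradient_Lrho_sG ρ hG0]
  simp only [pInner, neg_neg]
  linarith

/-- a strong stationary point `(x*, s*, y*)` of (MPVCS) is an equilibrium
point of the branch gradient/anti-gradient flow for every signature `σ` with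
`s* ∈ C^b(σ)`: the negative `(x,s)`-gradient of `L^ρ` lies in the polar of the tangent
cone `T(C × C^b(σ), (x*, s*))` and `∇_y L^ρ(x*, s*, y*) = c(x*, s*) = 0`. -/
theorem strong_stationary_is_equilibrium {n m l : ℕ}
    (f : EuclideanSpace ℝ (Fin n) → ℝ)
    (g : EuclideanSpace ℝ (Fin n) → EuclideanSpace ℝ (Fin m))
    (G H : Fin l → EuclideanSpace ℝ (Fin n) → ℝ)
    (C : Set (EuclideanSpace ℝ (Fin n))) (ρ : ℝ)
    (hf : ContDiff ℝ 2 f) (hg : ContDiff ℝ 2 g)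
    (hG : ∀ i, ContDiff ℝ 2 (G i)) (hH : ∀ i, ContDiff ℝ 2 (H i))
    (hCne : C.Nonempty) (hCcl : IsClosed C) (hCcv : Convex ℝ C) (hρ : 0 ≤ ρ)
    (xstar : EuclideanSpace ℝ (Fin n)) (sH sG : EuclideanSpace ℝ (Fin l))
    (yg : EuclideanSpace ℝ (Fin m)) (yH yG : EuclideanSpace ℝ (Fin l))
    -- (x*, s*) is feasible for (MPVCS)
    (hxC : xstar ∈ C) (hgx : g xstar = 0)
    (hH0 : ∀ i, H i xstar - sH i = 0) (hG0 : ∀ i, G i xstar - sG i = 0)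
    (hsH : ∀ i, 0 ≤ sH i) (hsGH : ∀ i, 0 ≤ sG i * sH i)
    -- strong stationarity in x
    (hstat : -(gradient (fun x => f x + (inner ℝ yg (g x) : ℝ)
          + (∑ i, yH i * H i x) + ∑ i, yG i * G i x) xstar)
        ∈ polarCone (tcone C xstar))
    -- multiplier sign conditions
    (hyH_plus : ∀ i, 0 < H i xstar → yH i = 0)
    (hyH_00_0p : ∀ i, H i xstar = 0 → 0 ≤ G i xstar → yH i ≤ 0)
    (hyG_0 : ∀ i, H i xstar = 0 → yG i = 0)
    (hyG_pp : ∀ i, 0 < H i xstar → 0 < G i xstar → yG i = 0)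
    (hyG_p0 : ∀ i, 0 < H i xstar → G i xstar = 0 → yG i ≤ 0) :
    ∀ σ : Fin l → Bool, (sH, sG) ∈ branchSet σ →
      ((-(gradient (fun x => Lrho f g G H ρ yg yH yG x sH sG) xstar),
        -(gradient (fun s => Lrho f g G H ρ yg yH yG xstar s sG) sH),
        -(gradient (fun s => Lrho f g G H ρ yg yH yG xstar sH s) sG))
          ∈ {d | ∀ v ∈ tcone (C ×ˢ branchSet σ) (xstar, (sH, sG)), pInner d v ≤ 0}) ∧
      g xstar = 0 ∧ (∀ i, H i xstar - sH i = 0) ∧ (∀ i, G i xstar - sG i = 0) :=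
  strong_stationary_is_equilibrium_general f g G H C ρ hf hg hG hH xstar sH sG yg yH yG hgx hH0 hG0
    hstat hyH_plus hyH_00_0p hyG_0 hyG_pp hyG_p0
end
end

section
/- Let σ ∈ {0,1}ˡ be a signature, x* ∈ C, s* ∈ C^b(σ), and y* = (y_g, y_H, y_G) ∈ ℝᵐ × ℝˡ × ℝˡ. Assume: (i) feasibility: g(x*) = 0, H_i(x*) = s*_{H,i} and G_i(x*) = s*_{G,i} for all i; (ii) branch stationarity: −∇_{(x,s)} L(x*, s*, y*) ∈ T(C × C^b(σ), (x*, s*))⁻; (iii) no switching condition is triggered, i.e., for every i with σ_i = 1 and s*_{H,i} = s*_{G,i} = 0 it is NOT the case that (y_{H,i} ≤ 0 and y_{G,i} < 0), and for every i with σ_i = 0 and s*_{G,i} = 0 it is NOT the case that (y_{G,i} > 0 or (y_{G,i} = 0 and y_{H,i} > 0)) (note that −∇_{s_H,i}L = y_{H,i} and −∇_{s_G,i}L = y_{G,i}). Then x* is a strong stationary point of (MPVC) with multipliers η_H := y_H and η_G := y_G: −∇ₓ[f + ⟨y_g, g⟩ + Σᵢ (η_H)_i H_i + Σᵢ (η_G)_i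 G_i](x*) ∈ T(C, x*)⁻, with (η_H)_i = 0 for i ∈ I₊(x*), (η_H)_i ≤ 0 for i ∈ I₀₀(x*) ∪ I₀₊(x*), (η_H)_i unrestricted for i ∈ I₀₋(x*), (η_G)_i = 0 for i ∈ I₀(x*) ∪ I₊₊(x*), and (η_G)_i ≤ 0 for i ∈ I₊₀(x*). -/
/-!
Testing the branch-stationarity condition against tangent directions of the product
`C × C^b(σ)` that move only `x`, resp. only `s`, splits it into the `x`-part, which is the
first condition of strong stationarity (the Lagrangian differs from the (MPVC) Lagrangian by a
term constant in `x`), and a normal-cone inequality for `(y_H, y_G)` at `s*` in the convex set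
`C^b(σ)`. Since `C^b(σ)` is a product over the indices, the latter holds index by index: on an
upper branch both `y_{H,i}` and `y_{G,i}` are nonpositive and complementary to `s*_{H,i}`,
`s*_{G,i}`; on a lower branch `y_{G,i} ≥ 0` is complementary to `s*_{G,i} ≤ 0`. At the
biactive indices the missing signs are exactly what the no-switching conditions supply.
-/

noncomputable section

open Filter Topology

/-- The Lagrangian `L(x, s, y)` of (MPVCS) with multiplier `y = (y_g, y_H, y_G)`. -/
def Lag {n m l : ℕ} (f : EuclideanSpace ℝ (Fin n) → ℝ)
    (g : EuclideanSpace ℝ (Fin n) → EuclideanSpace ℝ (Fin m))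
    (G H : Fin l → EuclideanSpace ℝ (Fin n) → ℝ)
    (yg : EuclideanSpace ℝ (Fin m)) (yH yG : EuclideanSpace ℝ (Fin l))
    (x : EuclideanSpace ℝ (Fin n)) (sH sG : EuclideanSpace ℝ (Fin l)) : ℝ :=
  f x + (inner ℝ yg (g x) : ℝ) + (∑ i, yH i * (H i x - sH i)) + ∑ i, yG i * (G i x - sG i)

section TangentCone

variable {V W : Type*} [NormedAddCommGroup V] [NormedSpace ℝ V]
  [NormedAddCommGroup W] [NormedSpace ℝ W] {C : Set V} {S : Set W} {x : V} {s : W}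

lemma mk_zero_mem_tcone_prod (hs : s ∈ S) {v : V} (hv : v ∈ tcone C x) :
    (v, (0 : W)) ∈ tcone (C ×ˢ S) (x, s) := by
  obtain ⟨xs, lam, hmem, hlam, hlim, hdir⟩ := hv
  refine ⟨fun k => (xs k, s), lam, fun k => ⟨hmem k, hs⟩, hlam,
    hlim.prodMk_nhds tendsto_const_nhds, ?_⟩
  simpa [Prod.smul_mk] using hdir.prodMk_nhds (tendsto_const_nhds (x := (0 : W)))

lemma zero_mk_mem_tcone_prod (hx : x ∈ C) {w : W} (hw : w ∈ tcone S s) :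
    ((0 : V), w) ∈ tcone (C ×ˢ S) (x, s) := by
  obtain ⟨ss, lam, hmem, hlam, hlim, hdir⟩ := hw
  refine ⟨fun k => (x, ss k), lam, fun k => ⟨hx, hmem k⟩, hlam,
    tendsto_const_nhds.prodMk_nhds hlim, ?_⟩
  simpa [Prod.smul_mk] using (tendsto_const_nhds (x := (0 : V))).prodMk_nhds hdir

lemma sub_mem_tcone_of_convex_s10 (hS : Convex ℝ S) (hs : s ∈ S) {s' : W} (hs' : s' ∈ S) :
    s' - s ∈ tcone S s := by
  have hpos : ∀ k : ℕ, (0 : ℝ) < k + 1 := fun k => by positivity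
  refine ⟨fun k => s + ((k : ℝ) + 1)⁻¹ • (s' - s), fun k => (k : ℝ) + 1, fun k => ?_,
    fun k => (hpos k).le, ?_, ?_⟩
  · exact hS.add_smul_sub_mem hs hs'
      ⟨by positivity, inv_le_one_of_one_le₀ (by linarith [k.cast_nonneg (α := ℝ)])⟩
  · simpa using ((tendsto_one_div_add_atTop_nhds_zero_nat (𝕜 := ℝ)).smul_const
      (s' - s)).const_add s
  · simp [smul_smul, mul_inv_cancel₀ (hpos _).ne']

end TangentCone

section ProductStationarity

variable {n l : ℕ} {C : Set (EuclideanSpace ℝ (Fin n))}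
  {S : Set (EuclideanSpace ℝ (Fin l) × EuclideanSpace ℝ (Fin l))}
  {x : EuclideanSpace ℝ (Fin n)} {s : EuclideanSpace ℝ (Fin l) × EuclideanSpace ℝ (Fin l)}
  {a : EuclideanSpace ℝ (Fin n) × EuclideanSpace ℝ (Fin l) × EuclideanSpace ℝ (Fin l)}

lemma mem_polarCone_of_pInner_nonpos (hs : s ∈ S)
    (h : ∀ v ∈ tcone (C ×ˢ S) (x, s), pInner a v ≤ 0) : a.1 ∈ polarCone (tcone C x) := by
  intro v hv
  simpa [pInner] using h _ (mk_zero_mem_tcone_prod hs hv)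

lemma inner_sub_add_inner_sub_nonpos_of_pInner_nonpos (hx : x ∈ C) (hS : Convex ℝ S)
    (hs : s ∈ S) (h : ∀ v ∈ tcone (C ×ˢ S) (x, s), pInner a v ≤ 0)
    {s' : EuclideanSpace ℝ (Fin l) × EuclideanSpace ℝ (Fin l)} (hs' : s' ∈ S) :
    inner ℝ a.2.1 (s'.1 - s.1) + inner ℝ a.2.2 (s'.2 - s.2) ≤ (0 : ℝ) := by
  simpa [pInner] using h _ (zero_mk_mem_tcone_prod hx (sub_mem_tcone_of_convex_s10 hS hs hs'))

end ProductStationarity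

lemma gradient_const_sub_inner {E : Type*} [NormedAddCommGroup E] [InnerProductSpace ℝ E]
    [CompleteSpace E] (c : ℝ) (a x : E) :
    gradient (fun s => c - (inner ℝ a s : ℝ)) x = -a := by
  refine HasGradientAt.gradient ?_
  rw [hasGradientAt_iff_hasFDerivAt, map_neg, ← zero_sub]
  exact (hasFDerivAt_const c x).sub (InnerProductSpace.toDual ℝ E a).hasFDerivAt

section Lagrangian

variable {n m l : ℕ} (f : EuclideanSpace ℝ (Fin n) → ℝ)
  (g : EuclideanSpace ℝ (Fin n) → EuclideanSpace ℝ (Fin m))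
  (G H : Fin l → EuclideanSpace ℝ (Fin n) → ℝ)
  (yg : EuclideanSpace ℝ (Fin m)) (yH yG : EuclideanSpace ℝ (Fin l))

lemma sum_mul_eq_inner (y s : EuclideanSpace ℝ (Fin l)) :
    ∑ i, y i * s i = (inner ℝ y s : ℝ) := by
  simp [PiLp.inner_apply, mul_comm]

lemma gradient_Lag_x (x : EuclideanSpace ℝ (Fin n)) (sH sG : EuclideanSpace ℝ (Fin l)) :
    gradient (fun x => Lag f g G H yg yH yG x sH sG) x =
      gradient (fun x => f x + (inner ℝ yg (g x) : ℝ)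
        + (∑ i, yH i * H i x) + ∑ i, yG i * G i x) x := by
  have hLag : (fun x => Lag f g G H yg yH yG x sH sG) = fun x => (f x + (inner ℝ yg (g x) : ℝ)
      + (∑ i, yH i * H i x) + ∑ i, yG i * G i x)
      + (-(∑ i, yH i * sH i) - ∑ i, yG i * sG i) := by
    funext x
    simp only [Lag, mul_sub, Finset.sum_sub_distrib]
    ring
  rw [hLag, gradient, fderiv_add_const, ← gradient]

lemma gradient_Lag_sH (x : EuclideanSpace ℝ (Fin n)) (sH sG : EuclideanSpace ℝ (Fin l)) :
    gradient (fun s => Lag f g G H yg yH yG x s sG) sH = -yH := by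
  have hLag : (fun s => Lag f g G H yg yH yG x s sG) = fun s => (f x + (inner ℝ yg (g x) : ℝ)
      + (∑ i, yH i * H i x) + ∑ i, yG i * (G i x - sG i)) - (inner ℝ yH s : ℝ) := by
    funext s
    simp only [Lag, mul_sub, Finset.sum_sub_distrib, ← sum_mul_eq_inner]
    ring
  rw [hLag, gradient_const_sub_inner]

lemma gradient_Lag_sG (x : EuclideanSpace ℝ (Fin n)) (sH sG : EuclideanSpace ℝ (Fin l)) :
    gradient (fun s => Lag f g G H yg yH yG x sH s) sG = -yG := by
  have hLag : (fun s => Lag f g G H yg yH yG x sH s) = fun s => (f x + (inner ℝ yg (g x) : ℝ)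
      + (∑ i, yH i * (H i x - sH i)) + ∑ i, yG i * G i x) - (inner ℝ yG s : ℝ) := by
    funext s
    simp only [Lag, mul_sub, Finset.sum_sub_distrib, ← sum_mul_eq_inner]
    ring
  rw [hLag, gradient_const_sub_inner]

end Lagrangian

section BranchSet

variable {l : ℕ} {σ : Fin l → Bool} {sH sG yH yG : EuclideanSpace ℝ (Fin l)}

lemma convex_branchSet (σ : Fin l → Bool) : Convex ℝ (branchSet σ) := by
  intro p hp q hq t u ht hu _ i
  refine ⟨fun hσ => ?_, fun hσ => ?_⟩
  · obtain ⟨hp1, hp2⟩ := (hp i).1 hσ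
    obtain ⟨hq1, hq2⟩ := (hq i).1 hσ
    exact ⟨show 0 ≤ t * p.1 i + u * q.1 i by positivity,
      show 0 ≤ t * p.2 i + u * q.2 i by positivity⟩
  · obtain ⟨hp1, hp2⟩ := (hp i).2 hσ
    obtain ⟨hq1, hq2⟩ := (hq i).2 hσ
    exact ⟨show t * p.1 i + u * q.1 i = 0 by simp [hp1, hq1],
      show t * p.2 i + u * q.2 i ≤ 0 by nlinarith⟩

lemma coord_normal_of_normal_branchSet (hs : (sH, sG) ∈ branchSet σ)
    (hN : ∀ s' ∈ branchSet σ,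
      inner ℝ yH (s'.1 - sH) + inner ℝ yG (s'.2 - sG) ≤ (0 : ℝ))
    (i : Fin l) {a b : ℝ}
    (hab : (σ i = true → 0 ≤ a ∧ 0 ≤ b) ∧ (σ i = false → a = 0 ∧ b ≤ 0)) :
    yH i * (a - sH i) + yG i * (b - sG i) ≤ 0 := by
  have hmem : (sH + EuclideanSpace.single i (a - sH i), sG + EuclideanSpace.single i (b - sG i))
      ∈ branchSet σ := by
    intro j
    by_cases hj : j = i
    · subst hj
      simpa using hab
    · simpa [hj] using hs j
  simpa [EuclideanSpace.inner_single_right, mul_comm] using hN _ hmem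

end BranchSet

/-- The sign conditions of strong stationarity of (MPVC) for one index, with `h = H_i(x)`,
`g = G_i(x)` and multipliers `ηH`, `ηG`. -/
def MPVCSignConditions (h g ηH ηG : ℝ) : Prop :=
  (0 < h → ηH = 0) ∧ (h = 0 → 0 ≤ g → ηH ≤ 0) ∧ (h = 0 → ηG = 0) ∧
    (0 < h → 0 < g → ηG = 0) ∧ (0 < h → g = 0 → ηG ≤ 0)

section SignConditions

variable {h g ηH ηG : ℝ}

lemma nonpos_and_mul_eq_zero_of_normal_Ici {η t : ℝ} (ht : 0 ≤ t)
    (hN : ∀ a, 0 ≤ a → η * (a - t) ≤ 0) : η ≤ 0 ∧ η * t = 0 := by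
  have h₁ := hN (t + 1) (by linarith)
  have h₀ := hN 0 le_rfl
  refine ⟨by linarith, le_antisymm ?_ (by linarith)⟩
  nlinarith

lemma nonneg_and_mul_eq_zero_of_normal_Iic {η t : ℝ} (ht : t ≤ 0)
    (hN : ∀ a, a ≤ 0 → η * (a - t) ≤ 0) : 0 ≤ η ∧ η * t = 0 := by
  have h₁ := hN (t - 1) (by linarith)
  have h₀ := hN 0 le_rfl
  refine ⟨by linarith, le_antisymm ?_ (by linarith)⟩
  nlinarith

lemma mpvcSignConditions_of_upper (hh : 0 ≤ h) (hg : 0 ≤ g)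
    (hN : ∀ a b, 0 ≤ a → 0 ≤ b → ηH * (a - h) + ηG * (b - g) ≤ 0)
    (hns : h = 0 → g = 0 → ¬(ηH ≤ 0 ∧ ηG < 0)) : MPVCSignConditions h g ηH ηG := by
  obtain ⟨hηH, hcH⟩ := nonpos_and_mul_eq_zero_of_normal_Ici hh
    fun a ha => by simpa using hN a g ha hg
  obtain ⟨hηG, hcG⟩ := nonpos_and_mul_eq_zero_of_normal_Ici hg
    fun b hb => by simpa using hN h b hh hb
  refine ⟨fun hpos => (mul_eq_zero.1 hcH).resolve_right hpos.ne', fun _ _ => hηH,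
    fun h0 => ?_, fun _ hpos => (mul_eq_zero.1 hcG).resolve_right hpos.ne', fun _ _ => hηG⟩
  rcases hg.eq_or_lt with hg0 | hpos
  · exact le_antisymm hηG (not_lt.1 fun hlt => hns h0 hg0.symm ⟨hηH, hlt⟩)
  · exact (mul_eq_zero.1 hcG).resolve_right hpos.ne'

lemma mpvcSignConditions_of_lower (hh : h = 0) (hg : g ≤ 0)
    (hN : ∀ b, b ≤ 0 → ηG * (b - g) ≤ 0)
    (hns : g = 0 → ¬(0 < ηG ∨ (ηG = 0 ∧ 0 < ηH))) : MPVCSignConditions h g ηH ηG := by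
  obtain ⟨hηG, hcG⟩ := nonneg_and_mul_eq_zero_of_normal_Iic hg hN
  have hηG0 : ηG = 0 := by
    rcases hg.eq_or_lt with hg0 | hneg
    · exact le_antisymm (not_lt.1 fun hlt => hns hg0 (Or.inl hlt)) hηG
    · exact (mul_eq_zero.1 hcG).resolve_right hneg.ne
  subst hh
  refine ⟨fun hpos => (lt_irrefl _ hpos).elim, fun _ hg' => ?_, fun _ => hηG0,
    fun hpos => (lt_irrefl _ hpos).elim, fun hpos => (lt_irrefl _ hpos).elim⟩
  exact not_lt.1 fun hlt => hns (le_antisymm hg hg') (Or.inr ⟨hηG0, hlt⟩)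

end SignConditions

lemma mpvcSignConditions_of_normal_branchSet {l : ℕ} {σ : Fin l → Bool}
    {sH sG yH yG : EuclideanSpace ℝ (Fin l)} (hs : (sH, sG) ∈ branchSet σ)
    (hN : ∀ s' ∈ branchSet σ,
      inner ℝ yH (s'.1 - sH) + inner ℝ yG (s'.2 - sG) ≤ (0 : ℝ)) (i : Fin l)
    (hns_upper : σ i = true → sH i = 0 → sG i = 0 → ¬(yH i ≤ 0 ∧ yG i < 0))
    (hns_lower : σ i = false → sG i = 0 → ¬(0 < yG i ∨ (yG i = 0 ∧ 0 < yH i))) :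
    MPVCSignConditions (sH i) (sG i) (yH i) (yG i) := by
  cases hσ : σ i
  · obtain ⟨hH, hG⟩ : sH i = 0 ∧ sG i ≤ 0 := (hs i).2 hσ
    refine mpvcSignConditions_of_lower hH hG (fun b hb => ?_) (hns_lower hσ)
    simpa [hH] using coord_normal_of_normal_branchSet hs hN i (a := 0) (b := b) (by simp [hσ, hb])
  · obtain ⟨hH, hG⟩ : 0 ≤ sH i ∧ 0 ≤ sG i := (hs i).1 hσ
    exact mpvcSignConditions_of_upper hH hG
      (fun a b ha hb => coord_normal_of_normal_branchSet hs hN i (by simp [hσ, ha, hb]))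
      (hns_upper hσ)

theorem branch_equilibrium_is_strong_stationary_general {n m l : ℕ}
    (f : EuclideanSpace ℝ (Fin n) → ℝ)
    (g : EuclideanSpace ℝ (Fin n) → EuclideanSpace ℝ (Fin m))
    (G H : Fin l → EuclideanSpace ℝ (Fin n) → ℝ)
    (C : Set (EuclideanSpace ℝ (Fin n)))
    (σ : Fin l → Bool)
    (xstar : EuclideanSpace ℝ (Fin n)) (sH sG : EuclideanSpace ℝ (Fin l))
    (yg : EuclideanSpace ℝ (Fin m)) (yH yG : EuclideanSpace ℝ (Fin l))
    (hxC : xstar ∈ C) (hsb : (sH, sG) ∈ branchSet σ)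
    -- (i) feasibility
    (hH0 : ∀ i, H i xstar = sH i) (hG0 : ∀ i, G i xstar = sG i)
    -- (ii) branch stationarity: −∇_{(x,s)}L ∈ T(C × C^b(σ), (x*, s*))⁻
    (hstat : ∀ v ∈ tcone (C ×ˢ branchSet σ) (xstar, (sH, sG)),
      pInner (-(gradient (fun x => Lag f g G H yg yH yG x sH sG) xstar),
              -(gradient (fun s => Lag f g G H yg yH yG xstar s sG) sH),
              -(gradient (fun s => Lag f g G H yg yH yG xstar sH s) sG)) v ≤ 0)
    -- (iii) no switching condition is triggered
    (hns_upper : ∀ i, σ i = true → sH i = 0 → sG i = 0 → ¬(yH i ≤ 0 ∧ yG i < 0))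
    (hns_lower : ∀ i, σ i = false → sG i = 0 →
      ¬(0 < yG i ∨ (yG i = 0 ∧ 0 < yH i))) :
    -- conclusion: strong stationarity of (MPVC) with η_H = y_H, η_G = y_G
    (-(gradient (fun x => f x + (inner ℝ yg (g x) : ℝ)
          + (∑ i, yH i * H i x) + ∑ i, yG i * G i x) xstar)
        ∈ polarCone (tcone C xstar)) ∧
    (∀ i, 0 < H i xstar → yH i = 0) ∧
    (∀ i, H i xstar = 0 → 0 ≤ G i xstar → yH i ≤ 0) ∧
    (∀ i, H i xstar = 0 → yG i = 0) ∧
    (∀ i, 0 < H i xstar → 0 < G i xstar → yG i = 0) ∧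
    (∀ i, 0 < H i xstar → G i xstar = 0 → yG i ≤ 0) := by
  rw [gradient_Lag_x, gradient_Lag_sH, gradient_Lag_sG] at hstat
  simp only [neg_neg] at hstat
  have hN := fun s' => inner_sub_add_inner_sub_nonpos_of_pInner_nonpos hxC
    (convex_branchSet σ) hsb hstat (s' := s')
  have hsign i := mpvcSignConditions_of_normal_branchSet hsb hN i (hns_upper i) (hns_lower i)
  simp only [hH0, hG0]
  exact ⟨mem_polarCone_of_pInner_nonpos hsb hstat, fun i => (hsign i).1,
    fun i => (hsign i).2.1, fun i => (hsign i).2.2.1, fun i => (hsign i).2.2.2.1,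
    fun i => (hsign i).2.2.2.2⟩

/-- a feasible, branch-stationary point at which no switching condition
is triggered is a strong stationary point of (MPVC) with multipliers
`η_H := y_H`, `η_G := y_G`. -/
theorem branch_equilibrium_is_strong_stationary {n m l : ℕ}
    (f : EuclideanSpace ℝ (Fin n) → ℝ)
    (g : EuclideanSpace ℝ (Fin n) → EuclideanSpace ℝ (Fin m))
    (G H : Fin l → EuclideanSpace ℝ (Fin n) → ℝ)
    (C : Set (EuclideanSpace ℝ (Fin n)))
    (hf : ContDiff ℝ 2 f) (hg : ContDiff ℝ 2 g)
    (hG : ∀ i, ContDiff ℝ 2 (G i)) (hH : ∀ i, ContDiff ℝ 2 (H i))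
    (hCne : C.Nonempty) (hCcl : IsClosed C) (hCcv : Convex ℝ C)
    (σ : Fin l → Bool)
    (xstar : EuclideanSpace ℝ (Fin n)) (sH sG : EuclideanSpace ℝ (Fin l))
    (yg : EuclideanSpace ℝ (Fin m)) (yH yG : EuclideanSpace ℝ (Fin l))
    (hxC : xstar ∈ C) (hsb : (sH, sG) ∈ branchSet σ)
    -- (i) feasibility
    (hgx : g xstar = 0) (hH0 : ∀ i, H i xstar = sH i) (hG0 : ∀ i, G i xstar = sG i)
    -- (ii) branch stationarity: −∇_{(x,s)}L ∈ T(C × C^b(σ), (x*, s*))⁻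
    (hstat : ∀ v ∈ tcone (C ×ˢ branchSet σ) (xstar, (sH, sG)),
      pInner (-(gradient (fun x => Lag f g G H yg yH yG x sH sG) xstar),
              -(gradient (fun s => Lag f g G H yg yH yG xstar s sG) sH),
              -(gradient (fun s => Lag f g G H yg yH yG xstar sH s) sG)) v ≤ 0)
    -- (iii) no switching condition is triggered
    (hns_upper : ∀ i, σ i = true → sH i = 0 → sG i = 0 → ¬(yH i ≤ 0 ∧ yG i < 0))
    (hns_lower : ∀ i, σ i = false → sG i = 0 →
      ¬(0 < yG i ∨ (yG i = 0 ∧ 0 < yH i))) :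
    -- conclusion: strong stationarity of (MPVC) with η_H = y_H, η_G = y_G
    (-(gradient (fun x => f x + (inner ℝ yg (g x) : ℝ)
          + (∑ i, yH i * H i x) + ∑ i, yG i * G i x) xstar)
        ∈ polarCone (tcone C xstar)) ∧
    (∀ i, 0 < H i xstar → yH i = 0) ∧
    (∀ i, H i xstar = 0 → 0 ≤ G i xstar → yH i ≤ 0) ∧
    (∀ i, H i xstar = 0 → yG i = 0) ∧
    (∀ i, 0 < H i xstar → 0 < G i xstar → yG i = 0) ∧
    (∀ i, 0 < H i xstar → G i xstar = 0 → yG i ≤ 0) :=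
  branch_equilibrium_is_strong_stationary_general f g G H C σ xstar sH sG yg yH yG hxC hsb hH0 hG0
    hstat hns_upper hns_lower
end
end

section
/- Let 𝟙 ∈ ℝᴺ denote the all-ones vector and suppose K(𝟙) is invertible. Let f ∈ ℝ^d, c > 0, σ̄ > 0, ā > 0, and let α > 0 satisfy α ≤ ā, α·c ≥ fᵀK(𝟙)⁻¹f, and α·ℓ_i·σ̄ ≥ |E·γ_iᵀK(𝟙)⁻¹f| for all i = 1,…,N. Then the point a := α·𝟙, u := α⁻¹K(𝟙)⁻¹f is feasible for the truss design constraints: K(a)u = f, fᵀu ≤ c, 0 ≤ a_i ≤ ā for all i, and (σ̄² − σ_i(u)²)·a_i ≥ 0 for all i, where σ_i(u) = E·γ_iᵀu/ℓ_i. -/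
open scoped Matrix

/-! The initialization is the unit-area design scaled by `α`: `K` is linear in the areas, so
`K(α𝟙) = α K(𝟙)` and `u = α⁻¹K(𝟙)⁻¹f` solves the equilibrium equation, while the compliance
`fᵀu` and all bar stresses are those of the unit-area design divided by `α`. -/

lemma Finset.sum_mul_smul_eq_smul_sum {ι R M : Type*} [Fintype ι] [CommSemiring R]
    [AddCommMonoid M] [Module R M] (α : R) (a : ι → R) (m : ι → M) :
    ∑ i, (α * a i) • m i = α • ∑ i, a i • m i := by
  simp only [Finset.smul_sum, mul_smul]

lemma Matrix.smul_mulVec_inv_smul_mulVec {n K : Type*} [Fintype n] [DecidableEq n] [Field K]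
    {A B : Matrix n n K} (hAB : A * B = 1) {α : K} (hα : α ≠ 0) (f : n → K) :
    (α • A) *ᵥ (α⁻¹ • B *ᵥ f) = f := by
  rw [Matrix.smul_mulVec, Matrix.mulVec_smul, Matrix.mulVec_mulVec, hAB, Matrix.one_mulVec,
    smul_smul, mul_inv_cancel₀ hα, one_smul]

lemma div_sq_le_sq_of_abs_le_mul {𝕜 : Type*} [Field 𝕜] [LinearOrder 𝕜] [IsStrictOrderedRing 𝕜]
    {x ℓ σ : 𝕜} (hℓ : 0 < ℓ) (h : |x| ≤ ℓ * σ) :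
    (x / ℓ) ^ 2 ≤ σ ^ 2 := by
  have hdiv : |x / ℓ| ≤ σ := by
    rwa [abs_div, abs_of_pos hℓ, div_le_iff₀ hℓ, mul_comm]
  rw [← sq_abs]
  exact pow_le_pow_left₀ (abs_nonneg _) hdiv 2

theorem truss_initialization_feasible_general {N d : ℕ} (E : ℝ)
    (ℓ : Fin N → ℝ) (hℓ : ∀ i, 0 < ℓ i) (γ : Fin N → Fin d → ℝ)
    (K : (Fin N → ℝ) → Matrix (Fin d) (Fin d) ℝ)
    (hK : ∀ a, K a = ∑ i, a i • ((E / ℓ i) • Matrix.vecMulVec (γ i) (γ i)))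
    -- K(𝟙) is invertible with inverse Kinv (𝟙 = all-ones vector)
    (Kinv : Matrix (Fin d) (Fin d) ℝ)
    (hKinv1 : K (fun _ => 1) * Kinv = 1)
    (f : Fin d → ℝ) (c σbar abar α : ℝ)
    (hα : 0 < α)
    (hαa : α ≤ abar)
    (hαc : f ⬝ᵥ Kinv.mulVec f ≤ α * c)
    (hαs : ∀ i, |E * (γ i ⬝ᵥ Kinv.mulVec f)| ≤ α * ℓ i * σbar)
    (a : Fin N → ℝ) (ha : a = fun _ => α)
    (u : Fin d → ℝ) (hu : u = α⁻¹ • Kinv.mulVec f) :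
    (K a).mulVec u = f ∧
    f ⬝ᵥ u ≤ c ∧
    (∀ i, 0 ≤ a i ∧ a i ≤ abar) ∧
    ∀ i, 0 ≤ (σbar ^ 2 - (E * (γ i ⬝ᵥ u) / ℓ i) ^ 2) * a i := by
  subst ha hu
  have hKα : K (fun _ => α) = α • K (fun _ => 1) := by
    simpa only [hK, mul_one] using
      Finset.sum_mul_smul_eq_smul_sum α (fun _ => 1) fun i => (E / ℓ i) • Matrix.vecMulVec (γ i) (γ i)
  refine ⟨?_, ?_, fun _ => ⟨hα.le, hαa⟩, fun i => ?_⟩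
  · rw [hKα]
    exact Matrix.smul_mulVec_inv_smul_mulVec hKinv1 hα.ne' f
  · rw [dotProduct_smul, smul_eq_mul, inv_mul_le_iff₀ hα]
    linarith
  · have hstress : |E * (γ i ⬝ᵥ α⁻¹ • Kinv *ᵥ f)| ≤ ℓ i * σbar := by
      rw [dotProduct_smul, smul_eq_mul, mul_left_comm, abs_mul, abs_inv, abs_of_pos hα,
        inv_mul_le_iff₀ hα, ← mul_assoc]
      exact hαs i
    have hsq := div_sq_le_sq_of_abs_le_mul (hℓ i) hstress
    exact mul_nonneg (by linarith) hα.le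

/-- feasibility of the initialization `a = α·𝟙`, `u = α⁻¹K(𝟙)⁻¹f` for the
truss design constraints, provided `α ≤ ā`, `α·c ≥ fᵀK(𝟙)⁻¹f`, and
`α·ℓᵢ·σ̄ ≥ |E·γᵢᵀK(𝟙)⁻¹f|` for all `i`. -/
theorem truss_initialization_feasible {N d : ℕ} (E : ℝ) (hE : 0 < E)
    (ℓ : Fin N → ℝ) (hℓ : ∀ i, 0 < ℓ i) (γ : Fin N → Fin d → ℝ)
    (K : (Fin N → ℝ) → Matrix (Fin d) (Fin d) ℝ)
    (hK : ∀ a, K a = ∑ i, a i • ((E / ℓ i) • Matrix.vecMulVec (γ i) (γ i)))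
    -- K(𝟙) is invertible with inverse Kinv (𝟙 = all-ones vector)
    (Kinv : Matrix (Fin d) (Fin d) ℝ)
    (hKinv1 : K (fun _ => 1) * Kinv = 1) (hKinv2 : Kinv * K (fun _ => 1) = 1)
    (f : Fin d → ℝ) (c σbar abar α : ℝ)
    (hc : 0 < c) (hσ : 0 < σbar) (habar : 0 < abar) (hα : 0 < α)
    (hαa : α ≤ abar)
    (hαc : f ⬝ᵥ Kinv.mulVec f ≤ α * c)
    (hαs : ∀ i, |E * (γ i ⬝ᵥ Kinv.mulVec f)| ≤ α * ℓ i * σbar)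
    (a : Fin N → ℝ) (ha : a = fun _ => α)
    (u : Fin d → ℝ) (hu : u = α⁻¹ • Kinv.mulVec f) :
    (K a).mulVec u = f ∧
    f ⬝ᵥ u ≤ c ∧
    (∀ i, 0 ≤ a i ∧ a i ≤ abar) ∧
    ∀ i, 0 ≤ (σbar ^ 2 - (E * (γ i ⬝ᵥ u) / ℓ i) ^ 2) * a i :=
  truss_initialization_feasible_general E ℓ hℓ γ K hK Kinv hKinv1 f c σbar abar α hα hαa hαc hαs a
    ha u hu
end
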